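/- arXiv:2108.11832 — 2 statements merged into one kernel-verified Lean document; each statement's English description precedes it below -/
import Mathlib

section
/- Let f : E → ℝ ∪ {∞} be locally Lipschitz continuous on its domain. If f is (b≤)-regular along a set M ⊆ dom f near a point x̄ ∈ M (meaning the epigraph of f is (b≤)-regular along the graph of f restricted to M near (x̄, f(x̄))), then the domain of f is (b≤)-regular along M near x̄. -/
/-! The map `x ↦ (x, f x)` is Lipschitz on the domain near `x̄`, so it carries points of `dom f`
and of `M` near `x̄` to points of `epi f` and of `gph f|_M` near `(x̄, f x̄)`, stretching
distances by at most `1 + K`. A normal `v` to `dom f` lifts to the horizontal normal `(v, 0)` to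
`epi f`, which has the same norm and satisfies `⟪(v, 0), (y, f y) - (x, f x)⟫ = ⟪v, y - x⟫`;
so the `(b≤)` estimate for `epi f` with `ε / (1 + K)` gives the one for `dom f` with `ε`. -/

open Filter Topology Metric
open scoped RealInnerProductSpace

section NormalCones

variable {F : Type*} [NormedAddCommGroup F] [InnerProductSpace ℝ F]

/-- The Fréchet normal cone to a set `Q` at a point `x`. -/
def frechetNormalCone (Q : Set F) (x : F) : Set F :=
  {v | ∀ ε > 0, ∃ δ > 0, ∀ y ∈ Q, ‖y - x‖ < δ → ⟪v, y - x⟫ ≤ ε * ‖y - x‖}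

/-- The limiting normal cone to a set `Q` at a point `x`. -/
def limitingNormalCone (Q : Set F) (x : F) : Set F :=
  {v | ∃ xs vs : ℕ → F, (∀ n, xs n ∈ Q) ∧ (∀ n, vs n ∈ frechetNormalCone Q (xs n)) ∧
    Tendsto xs atTop (𝓝 x) ∧ Tendsto vs atTop (𝓝 v)}

/-- `X` is `(b≤)`-regular along `Y` near a point `z`:
`⟪v, y − x⟫ ≤ o(‖y − x‖)·‖v‖` for `x ∈ X`, `y ∈ Y` near `z` and `v ∈ N_X(x)`. -/
def BLeqRegularAt (X Y : Set F) (z : F) : Prop :=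
  ∀ ε > 0, ∃ δ > 0, ∀ x ∈ X ∩ ball z δ, ∀ y ∈ Y ∩ ball z δ,
    ∀ v ∈ limitingNormalCone X x, ⟪v, y - x⟫ ≤ ε * ‖y - x‖ * ‖v‖

end NormalCones

variable {E : Type*} [NormedAddCommGroup E] [InnerProductSpace ℝ E]

/-- The epigraph of `f` with domain `D`, as a subset of the ℓ²-product `E ×₂ ℝ`. -/
def epiSet (D : Set E) (f : E → ℝ) : Set (WithLp 2 (E × ℝ)) :=
  {p | (WithLp.equiv 2 (E × ℝ) p).1 ∈ D ∧
    f (WithLp.equiv 2 (E × ℝ) p).1 ≤ (WithLp.equiv 2 (E × ℝ) p).2}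

/-- The graph of `f` restricted to `M`, as a subset of the ℓ²-product `E ×₂ ℝ`. -/
def gphSet (f : E → ℝ) (M : Set E) : Set (WithLp 2 (E × ℝ)) :=
  {p | (WithLp.equiv 2 (E × ℝ) p).1 ∈ M ∧
    (WithLp.equiv 2 (E × ℝ) p).2 = f (WithLp.equiv 2 (E × ℝ) p).1}

open WithLp

section LipschitzGraph

variable {G H : Type*} [SeminormedAddCommGroup G] [SeminormedAddCommGroup H]

theorem WithLp.prod_norm_toLp_le_add {p : ENNReal} [Fact (1 ≤ p)] (x : G) (y : H) :
    ‖toLp p (x, y)‖ ≤ ‖x‖ + ‖y‖ := by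
  have hsplit : toLp p (x, y) = toLp p (x, (0 : H)) + toLp p ((0 : G), y) := by
    rw [← toLp_add, Prod.mk_add_mk, add_zero, zero_add]
  rw [hsplit, ← norm_toLp_fst p G H x, ← norm_toLp_snd p G H y]
  exact norm_add_le _ _

theorem norm_toLp_graph_sub_le {f : G → ℝ} {x y : G} {K : ℝ}
    (h : |f y - f x| ≤ K * ‖y - x‖) :
    ‖toLp 2 (y, f y) - toLp 2 (x, f x)‖ ≤ (1 + K) * ‖y - x‖ := by
  rw [← toLp_sub, Prod.mk_sub_mk]
  calc ‖toLp 2 (y - x, f y - f x)‖ ≤ ‖y - x‖ + |f y - f x| :=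
        WithLp.prod_norm_toLp_le_add _ _
    _ ≤ (1 + K) * ‖y - x‖ := by linarith

theorem toLp_graph_mem_ball {f : G → ℝ} {x z : G} {K r : ℝ} (hK : 0 ≤ K)
    (hL : |f z - f x| ≤ K * ‖z - x‖) (hz : z ∈ ball x (r / (1 + K))) :
    toLp 2 (z, f z) ∈ ball (toLp 2 (x, f x)) r := by
  rw [mem_ball, dist_eq_norm]
  calc _ ≤ (1 + K) * ‖z - x‖ := norm_toLp_graph_sub_le hL
    _ < (1 + K) * (r / (1 + K)) := by gcongr; exact mem_ball_iff_norm.1 hz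
    _ = r := by field_simp

theorem continuousWithinAt_of_abs_sub_le_mul {D : Set G} {f : G → ℝ} {x : G} {K δ : ℝ}
    (hx : x ∈ D) (hδ : 0 < δ)
    (hL : ∀ y ∈ D ∩ ball x δ, ∀ z ∈ D ∩ ball x δ, |f y - f z| ≤ K * ‖y - z‖) :
    ContinuousWithinAt f D x := by
  have hLip : LipschitzOnWith (Real.toNNReal K) f (D ∩ ball x δ) :=
    LipschitzOnWith.of_dist_le' fun y hy z hz => by
      simpa only [dist_eq_norm, Real.norm_eq_abs] using hL y hy z hz
  exact (continuousWithinAt_inter (ball_mem_nhds x hδ)).1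
    (hLip.continuousOn.continuousWithinAt ⟨hx, mem_ball_self hδ⟩)

end LipschitzGraph

section NormalLift

variable {D : Set E} {f : E → ℝ} {x v : E}

theorem toLp_zero_mem_frechetNormalCone_epiSet (t : ℝ) (hv : v ∈ frechetNormalCone D x) :
    toLp 2 (v, 0) ∈ frechetNormalCone (epiSet D f) (toLp 2 (x, t)) := by
  intro ε hε
  obtain ⟨δ, hδ, hvδ⟩ := hv ε hε
  refine ⟨δ, hδ, fun p ⟨hpD, _⟩ hpδ => ?_⟩
  have hfst : ‖p.fst - x‖ ≤ ‖p - toLp 2 (x, t)‖ := WithLp.norm_fst_le E (p - toLp 2 (x, t))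
  calc ⟪toLp 2 (v, 0), p - toLp 2 (x, t)⟫ = ⟪v, p.fst - x⟫ := by simp
    _ ≤ ε * ‖p.fst - x‖ := hvδ p.fst hpD (hfst.trans_lt hpδ)
    _ ≤ ε * ‖p - toLp 2 (x, t)‖ := by gcongr

theorem toLp_zero_mem_limitingNormalCone_epiSet (hf : ContinuousWithinAt f D x)
    (hv : v ∈ limitingNormalCone D x) :
    toLp 2 (v, 0) ∈ limitingNormalCone (epiSet D f) (toLp 2 (x, f x)) := by
  obtain ⟨xs, vs, hxsD, hvs, hxs, hvv⟩ := hv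
  have hfxs : Tendsto (fun n => f (xs n)) atTop (𝓝 (f x)) :=
    hf.tendsto.comp (tendsto_nhdsWithin_iff.2 ⟨hxs, Eventually.of_forall hxsD⟩)
  exact ⟨fun n => toLp 2 (xs n, f (xs n)), fun n => toLp 2 (vs n, 0),
    fun n => ⟨hxsD n, le_rfl⟩,
    fun n => toLp_zero_mem_frechetNormalCone_epiSet _ (hvs n),
    ((prod_continuous_toLp 2 E ℝ).tendsto _).comp (hxs.prodMk_nhds hfxs),
    ((prod_continuous_toLp 2 E ℝ).tendsto _).comp (hvv.prodMk_nhds tendsto_const_nhds)⟩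

end NormalLift

/-- If `f` is locally Lipschitz on its domain `D` and `(b≤)`-regular along
`M ⊆ D` near `x̄ ∈ M` (i.e. its epigraph is `(b≤)`-regular along the graph of `f|_M` near
`(x̄, f(x̄))`), then `D = dom f` is `(b≤)`-regular along `M` near `x̄`. -/
theorem domain_bLeqRegular_of_function_bLeqRegular
    (D : Set E) (f : E → ℝ) (M : Set E) (xbar : E) (hM : M ⊆ D) (hx : xbar ∈ M)
    (hLip : ∀ x ∈ D, ∃ K > (0:ℝ), ∃ δ > (0:ℝ), ∀ y ∈ D ∩ ball x δ, ∀ z ∈ D ∩ ball x δ,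
      |f y - f z| ≤ K * ‖y - z‖)
    (hfb : BLeqRegularAt (epiSet D f) (gphSet f M)
      ((WithLp.equiv 2 (E × ℝ)).symm (xbar, f xbar))) :
    BLeqRegularAt D M xbar := by
  intro ε hε
  obtain ⟨K, hK, δ₀, hδ₀, hL⟩ := hLip xbar (hM hx)
  obtain ⟨δ₁, hδ₁, hreg⟩ := hfb (ε / (1 + K)) (by positivity)
  set δ := min δ₀ (δ₁ / (1 + K))
  have hL' : ∀ y ∈ D ∩ ball xbar δ, ∀ z ∈ D ∩ ball xbar δ, |f y - f z| ≤ K * ‖y - z‖ :=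
    fun y hy z hz => hL y ⟨hy.1, ball_subset_ball (min_le_left _ _) hy.2⟩
      z ⟨hz.1, ball_subset_ball (min_le_left _ _) hz.2⟩
  have hxbar : xbar ∈ D ∩ ball xbar δ := ⟨hM hx, mem_ball_self (by positivity)⟩
  have graph_mem_ball : ∀ z ∈ D ∩ ball xbar δ,
      toLp 2 (z, f z) ∈ ball (toLp 2 (xbar, f xbar)) δ₁ := fun z hz =>
    toLp_graph_mem_ball hK.le (hL' z hz xbar hxbar) (ball_subset_ball (min_le_right _ _) hz.2)
  refine ⟨δ, by positivity, fun x ⟨hxD, hxb⟩ y ⟨hyM, hyb⟩ v hv => ?_⟩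
  obtain ⟨_, -, δₓ, hδₓ, hLx⟩ := hLip x hxD
  have hv' := toLp_zero_mem_limitingNormalCone_epiSet
    (continuousWithinAt_of_abs_sub_le_mul hxD hδₓ hLx) hv
  calc ⟪v, y - x⟫ = ⟪toLp 2 (v, 0), toLp 2 (y, f y) - toLp 2 (x, f x)⟫ := by simp
    _ ≤ ε / (1 + K) * ‖toLp 2 (y, f y) - toLp 2 (x, f x)‖ * ‖toLp 2 (v, (0 : ℝ))‖ :=
        hreg (toLp 2 (x, f x)) ⟨⟨hxD, le_rfl⟩, graph_mem_ball x ⟨hxD, hxb⟩⟩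
          (toLp 2 (y, f y)) ⟨⟨hyM, rfl⟩, graph_mem_ball y ⟨hM hyM, hyb⟩⟩ _ hv'
    _ ≤ ε / (1 + K) * ((1 + K) * ‖y - x‖) * ‖v‖ := by
        rw [norm_toLp_fst]
        gcongr
        exact norm_toLp_graph_sub_le (hL' y ⟨hM hyM, hyb⟩ x ⟨hxD, hxb⟩)
    _ = ε * ‖y - x‖ * ‖v‖ := by field_simp
end

section
/- Let F : Y → E be a C¹ map between Euclidean spaces, X ⊆ E a locally closed set, and x̄ ∈ Y with F(x̄) ∈ X. Suppose the transversality-type condition holds: there exist τ > 0 and a neighborhood U of x̄ such that ‖∇F(x)* v‖ ≥ τ‖v‖ for all x ∈ F^{-1}(X) ∩ U and v ∈ N_X(F(x)). If moreover F is C² with ∇F L-Lipschitz near x̄, N_{F^{-1}(X)}(x) ⊆ ∇F(x)* N_X(F(x)) near x̄, N_{F^{-1}(Y₀)}(y) = ∇F(y)* N_{Y₀}(F(y)) for y ∈ F^{-1}(Y₀) near x̄ (where Y₀ ⊆ X), F is ℓ-Lipschitz on U, and X is strongly (a)-regular along Y₀ with constant C, then F^{-1}(X) is strongly (a)-regular along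 F^{-1}(Y₀) near x̄ with constant (L + Cℓ²)/τ. -/
open Filter Topology Metric
open scoped RealInnerProductSpace

/-! Write `w = ∇F(x)* v` with `v ∈ N_X(F x)`. Since `N_{F⁻¹(Y₀)}(y) = ∇F(y)* N_{Y₀}(F y)`,
`dist(w, N_{F⁻¹(Y₀)}(y)) ≤ ‖∇F(x) - ∇F(y)‖ ‖v‖ + ‖∇F(y)‖ dist(v, N_{Y₀}(F y))`. All normal cones
are closed under nonnegative scaling, so the distance of a normalized vector is at most the
distance of the vector divided by its norm. The first term is at most `L ‖x - y‖ ‖v‖`, the second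
at most `ℓ C ‖F x - F y‖ ‖v‖ ≤ C ℓ² ‖x - y‖ ‖v‖`, and transversality gives `‖v‖ ≤ ‖w‖ / τ`. -/

section NormalConeScaling

variable {H : Type*} [NormedAddCommGroup H] [InnerProductSpace ℝ H]

lemma zero_mem_frechetNormalCone (Q : Set H) (x : H) : (0 : H) ∈ frechetNormalCone Q x :=
  fun ε hε => ⟨1, one_pos, fun y _ _ => by simpa using mul_nonneg hε.le (norm_nonneg (y - x))⟩

lemma smul_mem_frechetNormalCone {Q : Set H} {x v : H} {c : ℝ} (hc : 0 ≤ c)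
    (hv : v ∈ frechetNormalCone Q x) : c • v ∈ frechetNormalCone Q x := by
  rcases hc.eq_or_lt with rfl | hc
  · simpa using zero_mem_frechetNormalCone Q x
  intro ε hε
  obtain ⟨δ, hδ, h⟩ := hv (ε / c) (by positivity)
  refine ⟨δ, hδ, fun y hy hyδ => ?_⟩
  calc ⟪c • v, y - x⟫ = c * ⟪v, y - x⟫ := real_inner_smul_left _ _ _
    _ ≤ c * (ε / c * ‖y - x‖) := by gcongr; exact h y hy hyδ
    _ = ε * ‖y - x‖ := by field_simp

lemma smul_mem_limitingNormalCone {Q : Set H} {x v : H} {c : ℝ} (hc : 0 ≤ c)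
    (hv : v ∈ limitingNormalCone Q x) : c • v ∈ limitingNormalCone Q x := by
  obtain ⟨xs, vs, hxs, hvs, hxlim, hvlim⟩ := hv
  exact ⟨xs, fun n => c • vs n, hxs, fun n => smul_mem_frechetNormalCone hc (hvs n), hxlim,
    hvlim.const_smul c⟩

end NormalConeScaling

lemma LipschitzWith.infDist_image_le {α β : Type*} [PseudoMetricSpace α] [PseudoMetricSpace β]
    {f : α → β} {K : NNReal} (hf : LipschitzWith K f) (x : α) (s : Set α) :
    infDist (f x) (f '' s) ≤ K * infDist x s := by
  rcases s.eq_empty_or_nonempty with rfl | hs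
  · simp
  have : Nonempty s := hs.to_subtype
  rw [infDist_eq_iInf (x := x), Real.mul_iInf_of_nonneg K.coe_nonneg]
  exact le_ciInf fun y =>
    (infDist_le_dist_of_mem (Set.mem_image_of_mem f y.2)).trans (hf.dist_le_mul x y)

section Cones

open Pointwise

variable {E : Type*} [NormedAddCommGroup E] [NormedSpace ℝ E]

lemma infDist_smul_le_of_smul_mem {K : Set E} (hK : ∀ c : ℝ, 0 ≤ c → ∀ z ∈ K, c • z ∈ K)
    (x : E) {c : ℝ} (hc : 0 ≤ c) : infDist (c • x) K ≤ c * infDist x K := by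
  rcases K.eq_empty_or_nonempty with rfl | ⟨z, hz⟩
  · simp
  rcases hc.eq_or_lt with rfl | hc
  · simpa using (infDist_zero_of_mem (by simpa using hK 0 le_rfl z hz)).le
  calc infDist (c • x) K ≤ infDist (c • x) (c • K) :=
        infDist_le_infDist_of_subset (Set.smul_set_subset_iff.mpr fun z hz => hK c hc.le z hz)
          ⟨c • z, Set.smul_mem_smul_set hz⟩
    _ = c * infDist x K := by rw [infDist_smul₀ hc.ne', Real.norm_of_nonneg hc.le]

end Cones

section Adjoint

variable {E G : Type*} [NormedAddCommGroup E] [InnerProductSpace ℝ E] [CompleteSpace E]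
  [NormedAddCommGroup G] [InnerProductSpace ℝ G] [CompleteSpace G]

open ContinuousLinearMap

lemma infDist_adjoint_image_le (A B : E →L[ℝ] G) (v : G) (K : Set G) :
    infDist (adjoint A v) (adjoint B '' K) ≤ ‖A - B‖ * ‖v‖ + ‖B‖ * infDist v K := by
  have hAB : dist (adjoint A v) (adjoint B v) ≤ ‖A - B‖ * ‖v‖ := by
    rw [dist_eq_norm, ← sub_apply, ← map_sub, ← LinearIsometryEquiv.norm_map adjoint (A - B)]
    exact le_opNorm _ _
  have hB : infDist (adjoint B v) (adjoint B '' K) ≤ ‖B‖ * infDist v K := by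
    simpa using (adjoint B).lipschitz.infDist_image_le v K
  linarith [infDist_le_infDist_add_dist (x := adjoint A v) (y := adjoint B v)
    (s := adjoint B '' K)]

lemma infDist_normalize_adjoint_le (A B : E →L[ℝ] G) (v : G) {K : Set G}
    (hK : ∀ c : ℝ, 0 ≤ c → ∀ z ∈ K, c • z ∈ K) :
    infDist (‖adjoint A v‖⁻¹ • adjoint A v) (adjoint B '' K) ≤
      ‖v‖ / ‖adjoint A v‖ * (‖A - B‖ + ‖B‖ * infDist (‖v‖⁻¹ • v) K) := by
  have hBK : ∀ c : ℝ, 0 ≤ c → ∀ z ∈ adjoint B '' K, c • z ∈ adjoint B '' K := by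
    rintro c hc _ ⟨z, hz, rfl⟩
    exact ⟨c • z, hK c hc z hz, map_smul _ _ _⟩
  have hv : infDist v K ≤ ‖v‖ * infDist (‖v‖⁻¹ • v) K := by
    rcases eq_or_ne v 0 with rfl | hv
    · simpa using infDist_smul_le_of_smul_mem hK 0 le_rfl
    simpa [smul_smul, hv] using infDist_smul_le_of_smul_mem hK (‖v‖⁻¹ • v) (norm_nonneg v)
  calc infDist (‖adjoint A v‖⁻¹ • adjoint A v) (adjoint B '' K)
      ≤ ‖adjoint A v‖⁻¹ * infDist (adjoint A v) (adjoint B '' K) :=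
        infDist_smul_le_of_smul_mem hBK _ (by positivity)
    _ ≤ ‖adjoint A v‖⁻¹ * (‖A - B‖ * ‖v‖ + ‖B‖ * (‖v‖ * infDist (‖v‖⁻¹ • v) K)) := by
        gcongr
        exact (infDist_adjoint_image_le A B v K).trans (by gcongr)
    _ = ‖v‖ / ‖adjoint A v‖ * (‖A - B‖ + ‖B‖ * infDist (‖v‖⁻¹ • v) K) := by ring

end Adjoint

theorem preimage_stronglyARegular_general
    {Y' E : Type*} [NormedAddCommGroup Y'] [InnerProductSpace ℝ Y'] [CompleteSpace Y']
    [NormedAddCommGroup E] [InnerProductSpace ℝ E] [CompleteSpace E]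
    (F : Y' → E) (hF : ContDiff ℝ 2 F)
    (X Y0 : Set E)
    (xbar : Y')
    (τ L ℓ C : ℝ) (hτ : 0 < τ) (hℓ : 0 ≤ ℓ) (hC : 0 ≤ C)
    (U : Set Y') (hUopen : IsOpen U) (hxU : xbar ∈ U)
    (V : Set E) (hVopen : IsOpen V) (hFxV : F xbar ∈ V)
    (htrans : ∀ x ∈ F ⁻¹' X ∩ U, ∀ v ∈ limitingNormalCone X (F x),
      τ * ‖v‖ ≤ ‖(ContinuousLinearMap.adjoint (fderiv ℝ F x)) v‖)
    (hLipJ : ∀ x ∈ U, ∀ y ∈ U, ‖fderiv ℝ F x - fderiv ℝ F y‖ ≤ L * ‖x - y‖)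
    (hLipF : ∀ x ∈ U, ∀ y ∈ U, ‖F x - F y‖ ≤ ℓ * ‖x - y‖)
    (hNX : ∀ x ∈ F ⁻¹' X ∩ U, limitingNormalCone (F ⁻¹' X) x ⊆
      {w | ∃ v ∈ limitingNormalCone X (F x),
        w = (ContinuousLinearMap.adjoint (fderiv ℝ F x)) v})
    (hNY : ∀ y ∈ F ⁻¹' Y0 ∩ U, limitingNormalCone (F ⁻¹' Y0) y =
      {w | ∃ v ∈ limitingNormalCone Y0 (F y),
        w = (ContinuousLinearMap.adjoint (fderiv ℝ F y)) v})
    (hstronga : ∀ u ∈ X ∩ V, ∀ y ∈ Y0 ∩ V, ∀ v ∈ limitingNormalCone X u, v ≠ 0 →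
      infDist (‖v‖⁻¹ • v) (limitingNormalCone Y0 y) ≤ C * ‖u - y‖) :
    ∃ δ > (0:ℝ), ∀ x ∈ F ⁻¹' X ∩ ball xbar δ, ∀ y ∈ F ⁻¹' Y0 ∩ ball xbar δ,
      ∀ w ∈ limitingNormalCone (F ⁻¹' X) x, w ≠ 0 →
      infDist (‖w‖⁻¹ • w) (limitingNormalCone (F ⁻¹' Y0) y) ≤
        ((L + C * ℓ ^ 2) / τ) * ‖x - y‖ := by
  obtain ⟨δ, hδ, hball⟩ := Metric.mem_nhds_iff.mp <|
    inter_mem (hUopen.mem_nhds hxU) ((hVopen.preimage hF.continuous).mem_nhds hFxV)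
  refine ⟨δ, hδ, ?_⟩
  rintro x ⟨hxX, hx⟩ y ⟨hyY, hy⟩ _ hw hw0
  obtain ⟨hxU, hFxV⟩ := hball hx
  obtain ⟨hyU, hFyV⟩ := hball hy
  obtain ⟨v, hv, rfl⟩ := hNX x ⟨hxX, hxU⟩ hw
  have hv0 : v ≠ 0 := by rintro rfl; simp at hw0
  have hNYy : limitingNormalCone (F ⁻¹' Y0) y =
      ContinuousLinearMap.adjoint (fderiv ℝ F y) '' limitingNormalCone Y0 (F y) := by
    rw [hNY y ⟨hyY, hyU⟩]; ext; simp [eq_comm]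
  have hnorm : ‖fderiv ℝ F y‖ ≤ ℓ := norm_fderiv_le_of_lip' ℝ hℓ <| by
    filter_upwards [hUopen.mem_nhds hyU] with z hz using hLipF z hz y hyU
  have hratio : ‖v‖ / ‖ContinuousLinearMap.adjoint (fderiv ℝ F x) v‖ ≤ τ⁻¹ := by
    rw [div_le_iff₀ (norm_pos_iff.mpr hw0), inv_mul_eq_div, le_div_iff₀ hτ, mul_comm]
    exact htrans x ⟨hxX, hxU⟩ v hv
  have hdist : infDist (‖v‖⁻¹ • v) (limitingNormalCone Y0 (F y)) ≤ C * (ℓ * ‖x - y‖) :=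
    (hstronga _ ⟨hxX, hFxV⟩ _ ⟨hyY, hFyV⟩ v hv hv0).trans
      (mul_le_mul_of_nonneg_left (hLipF x hxU y hyU) hC)
  have hd0 : 0 ≤ infDist (‖v‖⁻¹ • v) (limitingNormalCone Y0 (F y)) := infDist_nonneg
  rw [hNYy]
  calc _ ≤ _ := infDist_normalize_adjoint_le _ _ v fun _ hc _ hz =>
        smul_mem_limitingNormalCone hc hz
    _ ≤ τ⁻¹ * (L * ‖x - y‖ + ℓ * (C * (ℓ * ‖x - y‖))) := by
        gcongr
        exact hLipJ x hxU y hyU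
    _ = ((L + C * ℓ ^ 2) / τ) * ‖x - y‖ := by ring

/-- (Strong (a)-regularity of preimages under transversal maps.) Under the
stated quantitative transversality, Lipschitz, normal-cone-representation and strong
(a)-regularity hypotheses, the preimage `F⁻¹(X)` is strongly (a)-regular along `F⁻¹(Y₀)` near
`x̄` with constant `(L + C ℓ²)/τ`. -/
theorem preimage_stronglyARegular
    {Y' E : Type*} [NormedAddCommGroup Y'] [InnerProductSpace ℝ Y'] [CompleteSpace Y']
    [NormedAddCommGroup E] [InnerProductSpace ℝ E] [CompleteSpace E]
    (F : Y' → E) (hF : ContDiff ℝ 2 F)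
    (X Y0 : Set E) (hXclosed : IsClosed X) (hY0X : Y0 ⊆ X)
    (xbar : Y') (hxbar : F xbar ∈ X)
    (τ L ℓ C : ℝ) (hτ : 0 < τ) (hL : 0 ≤ L) (hℓ : 0 ≤ ℓ) (hC : 0 ≤ C)
    (U : Set Y') (hUopen : IsOpen U) (hxU : xbar ∈ U)
    (V : Set E) (hVopen : IsOpen V) (hFxV : F xbar ∈ V)
    (htrans : ∀ x ∈ F ⁻¹' X ∩ U, ∀ v ∈ limitingNormalCone X (F x),
      τ * ‖v‖ ≤ ‖(ContinuousLinearMap.adjoint (fderiv ℝ F x)) v‖)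
    (hLipJ : ∀ x ∈ U, ∀ y ∈ U, ‖fderiv ℝ F x - fderiv ℝ F y‖ ≤ L * ‖x - y‖)
    (hLipF : ∀ x ∈ U, ∀ y ∈ U, ‖F x - F y‖ ≤ ℓ * ‖x - y‖)
    (hNX : ∀ x ∈ F ⁻¹' X ∩ U, limitingNormalCone (F ⁻¹' X) x ⊆
      {w | ∃ v ∈ limitingNormalCone X (F x),
        w = (ContinuousLinearMap.adjoint (fderiv ℝ F x)) v})
    (hNY : ∀ y ∈ F ⁻¹' Y0 ∩ U, limitingNormalCone (F ⁻¹' Y0) y =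
      {w | ∃ v ∈ limitingNormalCone Y0 (F y),
        w = (ContinuousLinearMap.adjoint (fderiv ℝ F y)) v})
    (hstronga : ∀ u ∈ X ∩ V, ∀ y ∈ Y0 ∩ V, ∀ v ∈ limitingNormalCone X u, v ≠ 0 →
      infDist (‖v‖⁻¹ • v) (limitingNormalCone Y0 y) ≤ C * ‖u - y‖) :
    ∃ δ > (0:ℝ), ∀ x ∈ F ⁻¹' X ∩ ball xbar δ, ∀ y ∈ F ⁻¹' Y0 ∩ ball xbar δ,
      ∀ w ∈ limitingNormalCone (F ⁻¹' X) x, w ≠ 0 →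
      infDist (‖w‖⁻¹ • w) (limitingNormalCone (F ⁻¹' Y0) y) ≤
        ((L + C * ℓ ^ 2) / τ) * ‖x - y‖ :=
  preimage_stronglyARegular_general F hF X Y0 xbar τ L ℓ C hτ hℓ hC U hUopen hxU V hVopen hFxV
    htrans hLipJ hLipF hNX hNY hstronga
end
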